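/- The pair (c*, (d*_t)) with c* := V^{-1}(K + G H^{-1} h) and d*_t := (r_t V_t)^{-1} M_t H^{-1} h satisfies the constraint kappa = G' c* + sum_{t=1}^tau M_t' d*_t, achieves objective value Q(c*, d*) = h' H^{-1} h - K' V^{-1} K, and for every (c, d_1, ..., d_tau) satisfying the constraint kappa = G' c + sum_t M_t' d_t one has Q(c, d) >= h' H^{-1} h - K' V^{-1} K, with equality only if c = c* and d_t = d*_t for all t. (This constrained quadratic minimization underlies the paper's efficiency Proposition for the bias-corrected estimator with combined aggregate and micro moments.) -/

import Mathlib

/-! The claimed minimizer is the stationary point of the Lagrangian with multiplier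
`u = H⁻¹ h`: `V c* = K + G u` and `r_t V_t d*_t = M_t u`. Expanding `Q` around `(c*, d*)`,
the linear term is `2 (G' e + ∑_t M_t' δ_t) ⬝ u`, which vanishes on differences of feasible
points, so `Q(c* + e, d* + δ) = Q(c*, d*) + e' V e + ∑_t r_t δ_t' V_t δ_t`; positive
definiteness gives the minimum and its uniqueness. -/

open Matrix Finset

namespace Matrix

theorem PosDef.isSymm {n : Type*} {A : Matrix n n ℝ} (hA : A.PosDef) : A.IsSymm :=
  isHermitian_iff_isSymm.mp hA.1

variable {R : Type*} [CommRing R] {n : Type*} [Fintype n]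

theorem IsSymm.dotProduct_mulVec_comm {A : Matrix n n R} (hA : A.IsSymm) (x y : n → R) :
    x ⬝ᵥ (A *ᵥ y) = y ⬝ᵥ (A *ᵥ x) := by
  rw [dotProduct_mulVec, ← mulVec_transpose, hA.eq, dotProduct_comm]

theorem IsSymm.add_dotProduct_mulVec_add {A : Matrix n n R} (hA : A.IsSymm) (x y : n → R) :
    (x + y) ⬝ᵥ (A *ᵥ (x + y)) = x ⬝ᵥ (A *ᵥ x) + 2 * (y ⬝ᵥ (A *ᵥ x)) + y ⬝ᵥ (A *ᵥ y) := by
  simp only [mulVec_add, dotProduct_add, add_dotProduct, hA.dotProduct_mulVec_comm x y]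
  ring

theorem PosDef.mulVec_inv_mulVec [DecidableEq n] {A : Matrix n n ℝ} (hA : A.PosDef) (v : n → ℝ) :
    A *ᵥ (A⁻¹ *ᵥ v) = v := by
  rw [mulVec_mulVec, mul_nonsing_inv _ ((isUnit_iff_isUnit_det A).mp hA.isUnit), one_mulVec]

theorem PosSemidef.dotProduct_mulVec_self_nonneg {A : Matrix n n ℝ} (hA : A.PosSemidef)
    (x : n → ℝ) : 0 ≤ x ⬝ᵥ (A *ᵥ x) := by
  simpa using hA.dotProduct_mulVec_nonneg x

theorem PosDef.dotProduct_mulVec_self_eq_zero_iff {A : Matrix n n ℝ} (hA : A.PosDef)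
    {x : n → ℝ} : x ⬝ᵥ (A *ᵥ x) = 0 ↔ x = 0 := by
  refine ⟨fun h => by_contra fun hx => ?_, fun h => by simp [h]⟩
  simpa [h] using hA.dotProduct_mulVec_pos hx

end Matrix

section QuadObjective

variable {R : Type*} [CommRing R] {m k ι p : Type*} [Fintype m] [Fintype k] [Fintype ι] [Fintype p]

def quadObjective (V : Matrix m m R) (K : m → R) (r : ι → R) (Vt : ι → Matrix k k R)
    (c : m → R) (d : ι → k → R) : R :=
  c ⬝ᵥ (V *ᵥ c) - 2 * (c ⬝ᵥ K) + ∑ t, r t * (d t ⬝ᵥ (Vt t *ᵥ d t))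

variable {V : Matrix m m R} {K : m → R} {r : ι → R} {Vt : ι → Matrix k k R}

theorem quadObjective_add (hV : V.IsSymm) (hVt : ∀ t, (Vt t).IsSymm) (c e : m → R)
    (d δ : ι → k → R) :
    quadObjective V K r Vt (c + e) (d + δ) = quadObjective V K r Vt c d
      + 2 * (e ⬝ᵥ (V *ᵥ c - K) + ∑ t, δ t ⬝ᵥ ((r t • Vt t) *ᵥ d t))
      + quadObjective V 0 r Vt e δ := by
  simp only [quadObjective, Pi.add_apply, hV.add_dotProduct_mulVec_add,
    (hVt _).add_dotProduct_mulVec_add, smul_mulVec, dotProduct_smul, smul_eq_mul,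
    dotProduct_sub, add_dotProduct, dotProduct_zero, mul_add, sum_add_distrib, mul_sum]
  ring_nf

theorem quadObjective_add_of_stationary {G : Matrix m p R} {M : ι → Matrix k p R} {u : p → R}
    {c e : m → R} {d δ : ι → k → R}
    (hV : V.IsSymm) (hVt : ∀ t, (Vt t).IsSymm)
    (hc : V *ᵥ c = K + G *ᵥ u) (hd : ∀ t, (r t • Vt t) *ᵥ d t = M t *ᵥ u)
    (hker : Gᵀ *ᵥ e + ∑ t, (M t)ᵀ *ᵥ δ t = 0) :
    quadObjective V K r Vt (c + e) (d + δ)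
      = quadObjective V K r Vt c d + quadObjective V 0 r Vt e δ := by
  have hcross : e ⬝ᵥ (G *ᵥ u) + ∑ t, δ t ⬝ᵥ (M t *ᵥ u) = 0 := by
    simpa only [add_dotProduct, sum_dotProduct, mulVec_transpose, ← dotProduct_mulVec,
      zero_dotProduct] using congrArg (· ⬝ᵥ u) hker
  rw [quadObjective_add hV hVt, hc, add_sub_cancel_left]
  simp only [hd, hcross]
  ring

theorem quadObjective_of_stationary {G : Matrix m p R} {M : ι → Matrix k p R} {u : p → R}
    {c : m → R} {d : ι → k → R}
    (hc : V *ᵥ c = K + G *ᵥ u) (hd : ∀ t, (r t • Vt t) *ᵥ d t = M t *ᵥ u) :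
    quadObjective V K r Vt c d = (Gᵀ *ᵥ c + ∑ t, (M t)ᵀ *ᵥ d t) ⬝ᵥ u - c ⬝ᵥ K := by
  have hdt : ∀ t, r t * (d t ⬝ᵥ (Vt t *ᵥ d t)) = d t ⬝ᵥ (M t *ᵥ u) := fun t => by
    rw [← hd, smul_mulVec, dotProduct_smul, smul_eq_mul]
  simp only [quadObjective, hc, hdt, add_dotProduct, sum_dotProduct, dotProduct_add,
    mulVec_transpose, ← dotProduct_mulVec]
  ring

theorem quadObjective_zero_nonneg {V : Matrix m m ℝ} {r : ι → ℝ} {Vt : ι → Matrix k k ℝ}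
    (hV : V.PosSemidef) (hVt : ∀ t, (Vt t).PosSemidef) (hr : ∀ t, 0 ≤ r t)
    (e : m → ℝ) (δ : ι → k → ℝ) : 0 ≤ quadObjective V 0 r Vt e δ := by
  simp only [quadObjective, dotProduct_zero, mul_zero, sub_zero]
  exact add_nonneg (hV.dotProduct_mulVec_self_nonneg e)
    (sum_nonneg fun t _ => mul_nonneg (hr t) ((hVt t).dotProduct_mulVec_self_nonneg _))

theorem quadObjective_zero_eq_zero_iff {V : Matrix m m ℝ} {r : ι → ℝ} {Vt : ι → Matrix k k ℝ}
    (hV : V.PosDef) (hVt : ∀ t, (Vt t).PosDef) (hr : ∀ t, 0 < r t)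
    {e : m → ℝ} {δ : ι → k → ℝ} : quadObjective V 0 r Vt e δ = 0 ↔ e = 0 ∧ δ = 0 := by
  have hterm : ∀ t ∈ univ, 0 ≤ r t * (δ t ⬝ᵥ (Vt t *ᵥ δ t)) := fun t _ =>
    mul_nonneg (hr t).le ((hVt t).posSemidef.dotProduct_mulVec_self_nonneg _)
  simp only [quadObjective, dotProduct_zero, mul_zero, sub_zero]
  rw [add_eq_zero_iff_of_nonneg (hV.posSemidef.dotProduct_mulVec_self_nonneg e)
    (sum_nonneg hterm), sum_eq_zero_iff_of_nonneg hterm, hV.dotProduct_mulVec_self_eq_zero_iff]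
  simp only [mem_univ, true_implies, mul_eq_zero, (hr _).ne', false_or,
    (hVt _).dotProduct_mulVec_self_eq_zero_iff, funext_iff, Pi.zero_apply]

end QuadObjective

theorem efficiency_quadratic_minimization_general
    {m p ℓ τ : ℕ}
    (V : Matrix (Fin m) (Fin m) ℝ) (hV : V.PosDef)
    (Vt : Fin τ → Matrix (Fin ℓ) (Fin ℓ) ℝ) (hVt : ∀ t, (Vt t).PosDef)
    (r : Fin τ → ℝ) (hr : ∀ t, 0 < r t)
    (G : Matrix (Fin m) (Fin p) ℝ) (M : Fin τ → Matrix (Fin ℓ) (Fin p) ℝ)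
    (K : Fin m → ℝ) (κ : Fin p → ℝ)
    (H : Matrix (Fin p) (Fin p) ℝ)
    (hH : H = Gᵀ * V⁻¹ * G + ∑ t, (M t)ᵀ * (r t • Vt t)⁻¹ * M t)
    (hHpd : H.PosDef)
    (h : Fin p → ℝ) (hh : h = κ - Gᵀ *ᵥ (V⁻¹ *ᵥ K))
    (Q : (Fin m → ℝ) → (Fin τ → Fin ℓ → ℝ) → ℝ)
    (hQ : ∀ c d, Q c d = c ⬝ᵥ (V *ᵥ c) - 2 * (c ⬝ᵥ K) + ∑ t, r t * (d t ⬝ᵥ (Vt t *ᵥ d t)))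
    (cstar : Fin m → ℝ) (hc : cstar = V⁻¹ *ᵥ (K + G *ᵥ (H⁻¹ *ᵥ h)))
    (dstar : Fin τ → Fin ℓ → ℝ)
    (hd : ∀ t, dstar t = (r t • Vt t)⁻¹ *ᵥ (M t *ᵥ (H⁻¹ *ᵥ h))) :
    (κ = Gᵀ *ᵥ cstar + ∑ t, (M t)ᵀ *ᵥ dstar t) ∧
    (Q cstar dstar = h ⬝ᵥ (H⁻¹ *ᵥ h) - K ⬝ᵥ (V⁻¹ *ᵥ K)) ∧
    (∀ (c : Fin m → ℝ) (d : Fin τ → Fin ℓ → ℝ),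
      κ = Gᵀ *ᵥ c + ∑ t, (M t)ᵀ *ᵥ d t →
        (h ⬝ᵥ (H⁻¹ *ᵥ h) - K ⬝ᵥ (V⁻¹ *ᵥ K) ≤ Q c d ∧
          (Q c d = h ⬝ᵥ (H⁻¹ *ᵥ h) - K ⬝ᵥ (V⁻¹ *ᵥ K) → c = cstar ∧ ∀ t, d t = dstar t))) := by
  obtain rfl : Q = quadObjective V K r Vt := funext₂ hQ
  set u := H⁻¹ *ᵥ h
  have hVc : V *ᵥ cstar = K + G *ᵥ u := hc ▸ hV.mulVec_inv_mulVec _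
  have hWd (t) : (r t • Vt t) *ᵥ dstar t = M t *ᵥ u :=
    hd t ▸ ((hVt t).smul (hr t)).mulVec_inv_mulVec _
  have hfeas : Gᵀ *ᵥ cstar + ∑ t, (M t)ᵀ *ᵥ dstar t = κ := by
    calc _ = Gᵀ *ᵥ (V⁻¹ *ᵥ K) + H *ᵥ u := by
          simp only [hH, hc, hd, mulVec_add, add_mulVec, sum_mulVec, mulVec_mulVec,
            Matrix.mul_assoc]
          abel
      _ = κ := by rw [hHpd.mulVec_inv_mulVec, hh, add_sub_cancel]
  have hvalue : quadObjective V K r Vt cstar dstar = h ⬝ᵥ u - K ⬝ᵥ (V⁻¹ *ᵥ K) := by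
    have hcK : cstar ⬝ᵥ K = K ⬝ᵥ (V⁻¹ *ᵥ K) + (Gᵀ *ᵥ (V⁻¹ *ᵥ K)) ⬝ᵥ u := by
      rw [dotProduct_comm, hc, hV.inv.isSymm.dotProduct_mulVec_comm, add_dotProduct,
        dotProduct_comm (G *ᵥ u), mulVec_transpose, ← dotProduct_mulVec]
    rw [quadObjective_of_stationary hVc hWd, hfeas, hcK, hh, sub_dotProduct]
    ring
  refine ⟨hfeas.symm, hvalue, fun c d hcd => ?_⟩
  have hker : Gᵀ *ᵥ (c - cstar) + ∑ t, (M t)ᵀ *ᵥ (d - dstar) t = 0 := by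
    simp only [Pi.sub_apply, mulVec_sub, sum_sub_distrib]
    rw [sub_add_sub_comm, ← hcd, hfeas, sub_self]
  have hsplit := quadObjective_add_of_stationary hV.isSymm (fun t => (hVt t).isSymm) hVc hWd hker
  rw [add_sub_cancel, add_sub_cancel, hvalue] at hsplit
  rw [hsplit]
  refine ⟨le_add_of_nonneg_right (quadObjective_zero_nonneg hV.posSemidef
    (fun t => (hVt t).posSemidef) (fun t => (hr t).le) _ _), fun heq => ?_⟩
  obtain ⟨hc0, hd0⟩ := (quadObjective_zero_eq_zero_iff hV hVt hr).mp (by linarith)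
  exact ⟨sub_eq_zero.mp hc0, fun t => sub_eq_zero.mp (congrFun hd0 t)⟩

/-- The weights `c* = V⁻¹(K + G H⁻¹ h)` and `d*_t = (r_t V_t)⁻¹ M_t H⁻¹ h`
satisfy the constraint `κ = G' c + ∑_t M_t' d_t`, attain the objective value
`Q(c*, d*) = h' H⁻¹ h - K' V⁻¹ K`, and uniquely minimize the objective
`Q(c, d) = c' V c - 2 c' K + ∑_t r_t d_t' V_t d_t` over all `(c, d)` satisfying the
constraint. Here `H = G' V⁻¹ G + ∑_t M_t' (r_t V_t)⁻¹ M_t` and `h = κ - G' V⁻¹ K`. -/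
theorem efficiency_quadratic_minimization
    {m p ℓ τ : ℕ} (hm : 0 < m) (hp : 0 < p) (hℓ : 0 < ℓ)
    (V : Matrix (Fin m) (Fin m) ℝ) (hV : V.PosDef)
    (Vt : Fin τ → Matrix (Fin ℓ) (Fin ℓ) ℝ) (hVt : ∀ t, (Vt t).PosDef)
    (r : Fin τ → ℝ) (hr : ∀ t, 0 < r t)
    (G : Matrix (Fin m) (Fin p) ℝ) (M : Fin τ → Matrix (Fin ℓ) (Fin p) ℝ)
    (K : Fin m → ℝ) (κ : Fin p → ℝ)
    (H : Matrix (Fin p) (Fin p) ℝ)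
    (hH : H = Gᵀ * V⁻¹ * G + ∑ t, (M t)ᵀ * (r t • Vt t)⁻¹ * M t)
    (hHpd : H.PosDef)
    (h : Fin p → ℝ) (hh : h = κ - Gᵀ *ᵥ (V⁻¹ *ᵥ K))
    (Q : (Fin m → ℝ) → (Fin τ → Fin ℓ → ℝ) → ℝ)
    (hQ : ∀ c d, Q c d = c ⬝ᵥ (V *ᵥ c) - 2 * (c ⬝ᵥ K) + ∑ t, r t * (d t ⬝ᵥ (Vt t *ᵥ d t)))
    (cstar : Fin m → ℝ) (hc : cstar = V⁻¹ *ᵥ (K + G *ᵥ (H⁻¹ *ᵥ h)))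
    (dstar : Fin τ → Fin ℓ → ℝ)
    (hd : ∀ t, dstar t = (r t • Vt t)⁻¹ *ᵥ (M t *ᵥ (H⁻¹ *ᵥ h))) :
    (κ = Gᵀ *ᵥ cstar + ∑ t, (M t)ᵀ *ᵥ dstar t) ∧
    (Q cstar dstar = h ⬝ᵥ (H⁻¹ *ᵥ h) - K ⬝ᵥ (V⁻¹ *ᵥ K)) ∧
    (∀ (c : Fin m → ℝ) (d : Fin τ → Fin ℓ → ℝ),
      κ = Gᵀ *ᵥ c + ∑ t, (M t)ᵀ *ᵥ d t →
        (h ⬝ᵥ (H⁻¹ *ᵥ h) - K ⬝ᵥ (V⁻¹ *ᵥ K) ≤ Q c d ∧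
          (Q c d = h ⬝ᵥ (H⁻¹ *ᵥ h) - K ⬝ᵥ (V⁻¹ *ᵥ K) → c = cstar ∧ ∀ t, d t = dstar t))) :=
  efficiency_quadratic_minimization_general V hV Vt hVt r hr G M K κ H hH hHpd h hh Q hQ cstar hc
    dstar hd
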